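/- Let $m \geq 1$, $u \in \{0, \dots, m-1\}$, and let $\beta = \sum_{j=1}^m \beta_j 2^{-j}$ range over $\mathbb{Q}^*(2^m)$. Then for any fixed values $b_{1}, \dots, b_{u} \in \{0,1\}$ the restricted sum satisfies $\sum_{\beta_{u+1}, \dots, \beta_m \in \{0,1\}} \|2^u \beta\|^2 = 2^{-u} \cdot \frac{2^{2m} + 2^{2u+1}}{3 \cdot 2^{m+2}}$, where in the sum the first $u$ digits of $\beta$ are fixed to $\beta_j = b_j$; in particular, the value $\|2^u\beta\|^2$ depends only on the digits $\beta_{u+1}, \dots, \beta_m$. -/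

import Mathlib

open Finset

/-- Distance to the nearest integer. -/
noncomputable def dnn (x : ℝ) : ℝ := |x - round x|

/-- Real value of a bit. -/
def bitr (b : Bool) : ℝ := if b then 1 else 0

/-- First coordinate of a Hammersley point: t_m/2 + ... + t_1/2^m. -/
noncomputable def hamX (m : ℕ) (t : Fin m → Bool) : ℝ :=
  ∑ j : Fin m, bitr (t j) / 2 ^ (m - j.val)

/-- Second coordinate of a shifted Hammersley point: s_1/2 + ... + s_m/2^m with s_j = t_j ⊕ σ_j. -/
noncomputable def hamY (m : ℕ) (σ t : Fin m → Bool) : ℝ :=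
  ∑ j : Fin m, bitr (xor (t j) (σ j)) / 2 ^ (j.val + 1)

/-- Local discrepancy of the shifted Hammersley point set H_m(σ). -/
noncomputable def Δham (m : ℕ) (σ : Fin m → Bool) (α β : ℝ) : ℝ :=
  ((Finset.univ.filter (fun t : Fin m → Bool => hamX m t < α ∧ hamY m σ t < β)).card : ℝ)
    - 2 ^ m * α * β

/-- digit i (1-based) of an m-digit vector, with value false outside 1..m. -/
def dig (m : ℕ) (a : Fin m → Bool) (i : ℕ) : Bool :=
  if h : 1 ≤ i ∧ i ≤ m then a ⟨i - 1, by omega⟩ else false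

/-- The m-bit real number with binary digits a: ∑ a_j 2^{-j}. -/
noncomputable def mval (m : ℕ) (a : Fin m → Bool) : ℝ :=
  ∑ j : Fin m, bitr (a j) / 2 ^ (j.val + 1)

/-- The index function j(u) associated with digits a of α, digits b of β, and shift τ. -/
def jfun (m : ℕ) (a b τ : Fin m → Bool) (u : ℕ) : ℕ :=
  Nat.findGreatest (fun j => dig m a (m + 1 - j) ≠ xor (dig m b j) (dig m τ j)) u

/-- Smallest m-bit number ≥ α. -/
noncomputable def upm (m : ℕ) (α : ℝ) : ℝ := (⌈2 ^ m * α⌉ : ℝ) / 2 ^ m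

/-- Local discrepancy of the symmetrized Hammersley point set H_m(σ) ∪ H_m(σ*) (multiset union). -/
noncomputable def Δsym (m : ℕ) (σ : Fin m → Bool) (α β : ℝ) : ℝ :=
  (((Finset.univ.filter (fun t : Fin m → Bool => hamX m t < α ∧ hamY m σ t < β)).card : ℝ)
    + ((Finset.univ.filter (fun t : Fin m → Bool =>
        hamX m t < α ∧ hamY m (fun j => !(σ j)) t < β)).card : ℝ))
    - 2 ^ (m + 1) * α * β

-- Auxiliary lemmas
lemma sum_range_split {M : Type*} [AddCommMonoid M] (f : ℕ → M) (a c : ℕ) :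
    ∑ k ∈ range (a + c), f k = (∑ k ∈ range a, f k) + ∑ j ∈ range c, f (a + j) := by
  have h1 : ∑ k ∈ range (a + c), f k = (∑ k ∈ Ico 0 a, f k) + ∑ k ∈ Ico a (a + c), f k := by
    rw [Finset.range_eq_Ico,
      ← Finset.sum_Ico_consecutive f (Nat.zero_le a) (Nat.le_add_right a c)]
  rw [h1, ← Finset.range_eq_Ico, Finset.sum_Ico_eq_sum_range]
  simp

lemma sumsq (M : ℕ) : ∑ i ∈ range M, (i : ℝ) ^ 2 = M * (M - 1) * (2 * M - 1) / 6 := by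
  induction M with
  | zero => simp
  | succ p ih => rw [Finset.sum_range_succ, ih]; push_cast; ring

lemma sumid (M : ℕ) : ∑ i ∈ range M, (i : ℝ) = M * (M - 1) / 2 := by
  induction M with
  | zero => simp
  | succ p ih => rw [Finset.sum_range_succ, ih]; push_cast; ring

lemma dnn_of_lt_half {x : ℝ} (h0 : 0 ≤ x) (h1 : x < 1/2) : dnn x = x := by
  unfold dnn
  rw [round_eq]
  have : ⌊x + 1/2⌋ = 0 := by
    apply Int.floor_eq_zero_iff.2
    constructor <;> simp <;> linarith
  rw [this]
  simp [abs_of_nonneg h0]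

lemma dnn_of_ge_half {x : ℝ} (h0 : 1/2 ≤ x) (h1 : x < 1) : dnn x = 1 - x := by
  unfold dnn
  rw [round_eq]
  have : ⌊x + 1/2⌋ = 1 := by
    apply Int.floor_eq_iff.2
    constructor <;> push_cast <;> linarith
  rw [this]
  rw [abs_of_nonpos (by push_cast; linarith)]
  push_cast; ring

lemma dnn_natCast_add (K : ℕ) (x : ℝ) : dnn ((K : ℝ) + x) = dnn x := by
  unfold dnn
  rw [add_comm, round_add_natCast]
  push_cast
  ring_nf

lemma mval_succ (n : ℕ) (d : Fin (n + 1) → Bool) :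
    mval (n + 1) d = bitr (d 0) / 2 + mval n (fun i => d i.succ) / 2 := by
  unfold mval
  rw [Fin.sum_univ_succ, Finset.sum_div]
  congr 1
  · norm_num
  · apply Finset.sum_congr rfl
    intro i _
    rw [div_div, ← pow_succ]
    rfl

lemma boolToRange (n : ℕ) (f : ℝ → ℝ) :
    ∑ d : Fin n → Bool, f (mval n d) = ∑ k ∈ range (2 ^ n), f ((k : ℝ) / 2 ^ n) := by
  induction n generalizing f with
  | zero => simp [mval]
  | succ p ih =>
    rw [← Equiv.sum_comp (Fin.consEquiv (fun _ : Fin (p + 1) => Bool))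
      (fun d => f (mval (p + 1) d)), Fintype.sum_prod_type, Fintype.sum_bool]
    have hc : ∀ (x : Bool) (y : Fin p → Bool),
        mval (p + 1) ((Fin.consEquiv (fun _ : Fin (p + 1) => Bool)) (x, y))
          = bitr x / 2 + mval p y / 2 := by
      intro x y
      rw [mval_succ]
      simp [Fin.consEquiv]
    simp only [hc]
    rw [ih (fun z => f (bitr true / 2 + z / 2)), ih (fun z => f (bitr false / 2 + z / 2))]
    have h2 : (2 : ℕ) ^ (p + 1) = 2 ^ p + 2 ^ p := by ring
    have hp : (2 : ℝ) ^ p ≠ 0 := by positivity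
    rw [h2, sum_range_split]
    rw [add_comm (∑ k ∈ range (2 ^ p), f (bitr true / 2 + (k:ℝ) / 2 ^ p / 2))]
    congr 1
    · apply Finset.sum_congr rfl
      intro k _
      have : bitr false / 2 + (k : ℝ) / 2 ^ p / 2 = (k : ℝ) / 2 ^ (p + 1) := by
        simp only [bitr, if_neg, Bool.false_eq_true, not_false_eq_true]
        rw [pow_succ]
        field_simp
        ring
      rw [this]
    · apply Finset.sum_congr rfl
      intro k _
      have : bitr true / 2 + (k : ℝ) / 2 ^ p / 2 = ((2 ^ p + k : ℕ) : ℝ) / 2 ^ (p + 1) := by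
        simp only [bitr, if_pos]
        push_cast
        rw [pow_succ]
        field_simp
      rw [this]

lemma rangeSum (p : ℕ) :
    ∑ k ∈ range (2 ^ (p + 1)), dnn ((k : ℝ) / 2 ^ (p + 1)) ^ 2
      = ((2 : ℝ) ^ (2 * (p + 1)) + 2) / (3 * 2 ^ (p + 1 + 2)) := by
  have hM : (0 : ℝ) < 2 ^ p := by positivity
  have hN : (0 : ℝ) < 2 ^ (p + 1) := by positivity
  have hNe : ((2 : ℝ) ^ (p + 1)) = 2 * 2 ^ p := by ring
  have h2 : (2 : ℕ) ^ (p + 1) = 2 ^ p + 2 ^ p := by ring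
  rw [h2, sum_range_split]
  have s1 : ∑ k ∈ range (2 ^ p), dnn ((k : ℝ) / 2 ^ (p + 1)) ^ 2
      = (∑ k ∈ range (2 ^ p), (k : ℝ) ^ 2) / ((2 : ℝ) ^ (p + 1)) ^ 2 := by
    rw [Finset.sum_div]
    apply Finset.sum_congr rfl
    intro k hk
    have hk' : (k : ℝ) < 2 ^ p := by exact_mod_cast Finset.mem_range.1 hk
    rw [dnn_of_lt_half (by positivity) (by rw [div_lt_iff₀ hN, hNe]; linarith), div_pow]
  have s2 : ∑ k ∈ range (2 ^ p), dnn ((((2 : ℕ) ^ p + k : ℕ) : ℝ) / 2 ^ (p + 1)) ^ 2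
      = (∑ k ∈ range (2 ^ p), ((2 : ℝ) ^ p - (k : ℝ)) ^ 2) / ((2 : ℝ) ^ (p + 1)) ^ 2 := by
    rw [Finset.sum_div]
    apply Finset.sum_congr rfl
    intro k hk
    have hk' : (k : ℝ) < 2 ^ p := by exact_mod_cast Finset.mem_range.1 hk
    have hk0 : (0 : ℝ) ≤ (k : ℝ) := Nat.cast_nonneg k
    push_cast
    rw [dnn_of_ge_half (by rw [le_div_iff₀ hN, hNe]; linarith)
      (by rw [div_lt_one hN, hNe]; linarith)]
    rw [eq_div_iff (by positivity : ((2:ℝ) ^ (p+1)) ^ 2 ≠ 0)]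
    field_simp
    ring
  rw [s1, s2]
  have s3 : ∑ k ∈ range (2 ^ p), ((2 : ℝ) ^ p - (k : ℝ)) ^ 2
      = ∑ k ∈ range (2 ^ p), (((2 : ℝ) ^ p) ^ 2 - 2 * 2 ^ p * (k : ℝ) + (k : ℝ) ^ 2) := by
    apply Finset.sum_congr rfl
    intros
    ring
  rw [s3, Finset.sum_add_distrib, Finset.sum_sub_distrib, Finset.sum_const, card_range,
    ← Finset.mul_sum, sumsq, sumid, nsmul_eq_mul]
  push_cast
  have hx : ((2 : ℝ) ^ (2 * (p + 1))) = 4 * (2 ^ p) ^ 2 := by ring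
  have hy : ((2 : ℝ) ^ (p + 1 + 2)) = 8 * 2 ^ p := by ring
  rw [hx, hy, hNe]
  field_simp
  ring

lemma dig_val (m : ℕ) (c : Fin m → Bool) (j : Fin m) : dig m c (j.val + 1) = c j := by
  unfold dig
  rw [dif_pos ⟨Nat.le_add_left _ _, j.isLt⟩]
  exact congrArg c (Fin.ext (by show j.val + 1 - 1 = j.val; omega))

theorem stmt14 (m : ℕ) (hm : 1 ≤ m) (u : ℕ) (hu : u ≤ m - 1) (b : Fin m → Bool) :
    ∑ c ∈ Finset.univ.filter (fun c : Fin m → Bool => ∀ j : Fin m, j.val < u → c j = b j),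
      dnn (2 ^ u * mval m c) ^ 2
      = (1 / 2 ^ u : ℝ) * (((2 : ℝ) ^ (2 * m) + 2 ^ (2 * u + 1)) / (3 * 2 ^ (m + 2))) := by
  have hum : u < m := by omega
  obtain ⟨n, rfl⟩ : ∃ n, m = u + n := ⟨m - u, by omega⟩
  have hn1 : 1 ≤ n := by omega
  -- the value of each term depends only on the trailing digits
  have hval : ∀ c : Fin (u + n) → Bool,
      (2 : ℝ) ^ u * mval (u + n) c
        = dnn (2 ^ u * mval (u + n) c) + dnn (2 ^ u * mval (u + n) c) → True := fun _ _ => trivial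
  have key : ∀ c : Fin (u + n) → Bool,
      dnn (2 ^ u * mval (u + n) c)
        = dnn (mval n (fun i : Fin n => c ⟨u + i.val, by have := i.isLt; omega⟩)) := by
    intro c
    have hmv : mval (u + n) c
        = ∑ j ∈ range (u + n), bitr (dig (u + n) c (j + 1)) / 2 ^ (j + 1) := by
      rw [← Fin.sum_univ_eq_sum_range (fun j => bitr (dig (u + n) c (j + 1)) / 2 ^ (j + 1))]
      unfold mval
      exact Finset.sum_congr rfl (fun j _ => by rw [dig_val])
    have hsplit : (2 : ℝ) ^ u * mval (u + n) c
        = ((∑ j ∈ range u, (if dig (u + n) c (j + 1) then 2 ^ (u - 1 - j) else 0 : ℕ) : ℕ) : ℝ)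
          + mval n (fun i : Fin n => c ⟨u + i.val, by have := i.isLt; omega⟩) := by
      rw [hmv, sum_range_split, mul_add]
      congr 1
      · rw [Finset.mul_sum, Nat.cast_sum]
        apply Finset.sum_congr rfl
        intro j hj
        have hj' : j < u := Finset.mem_range.1 hj
        cases h : dig (u + n) c (j + 1)
        · simp [bitr]
        · simp only [bitr, if_pos, Nat.cast_pow, Nat.cast_ofNat, if_true]
          rw [mul_one_div, div_eq_iff (by positivity : ((2 : ℝ) ^ (j + 1)) ≠ 0), ← pow_add]
          congr 1
          omega
      · have hmv2 : mval n (fun i : Fin n => c ⟨u + i.val, by have := i.isLt; omega⟩)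
            = ∑ i ∈ range n, bitr (dig (u + n) c (u + i + 1)) / 2 ^ (i + 1) := by
          rw [← Fin.sum_univ_eq_sum_range
            (fun i => bitr (dig (u + n) c (u + i + 1)) / 2 ^ (i + 1))]
          unfold mval
          apply Finset.sum_congr rfl
          intro i _
          have : dig (u + n) c (u + i.val + 1)
              = c ⟨u + i.val, by have := i.isLt; omega⟩ := by
            rw [show u + i.val + 1 = (⟨u + i.val, by have := i.isLt; omega⟩ : Fin (u+n)).val + 1
              from rfl, dig_val]
          rw [this]
        rw [hmv2, Finset.mul_sum]
        apply Finset.sum_congr rfl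
        intro i _
        rw [show (2 : ℝ) ^ (u + i + 1) = 2 ^ u * 2 ^ (i + 1) from (pow_add 2 u (i + 1))]
        have h1 : ((2 : ℝ) ^ u) ≠ 0 := by positivity
        have h2 : ((2 : ℝ) ^ (i + 1)) ≠ 0 := by positivity
        field_simp
    rw [hsplit, dnn_natCast_add]
  -- bijection onto free digit vectors
  have stepA : ∑ c ∈ Finset.univ.filter
        (fun c : Fin (u + n) → Bool => ∀ j : Fin (u + n), j.val < u → c j = b j),
        dnn (2 ^ u * mval (u + n) c) ^ 2
      = ∑ d : Fin n → Bool, dnn (mval n d) ^ 2 := by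
    apply Finset.sum_nbij'
      (i := fun (c : Fin (u + n) → Bool) (i : Fin n) =>
        c ⟨u + i.val, by have := i.isLt; omega⟩)
      (j := fun (d : Fin n → Bool) (j : Fin (u + n)) =>
        if h : j.val < u then b j else d ⟨j.val - u, by have := j.isLt; omega⟩)
    · intro c _
      exact Finset.mem_univ _
    · intro d _
      simp only [Finset.mem_filter, Finset.mem_univ, true_and]
      intro j hj
      rw [dif_pos hj]
    · intro c hc
      simp only [Finset.mem_filter, Finset.mem_univ, true_and] at hc
      funext j
      by_cases h : j.val < u
      · rw [dif_pos h, hc j h]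
      · rw [dif_neg h]
        exact congrArg c (Fin.ext (by show u + (j.val - u) = j.val; omega))
    · intro d _
      funext i
      dsimp only
      rw [dif_neg (Nat.not_lt.2 (Nat.le_add_right u i.val))]
      exact congrArg d (Fin.ext (by show u + i.val - u = i.val; omega))
    · intro c _
      rw [key c]
  rw [stepA]
  obtain ⟨p, rfl⟩ : ∃ p, n = p + 1 := ⟨n - 1, by omega⟩
  have hbtr : ∑ d : Fin (p + 1) → Bool, dnn (mval (p + 1) d) ^ 2
      = ∑ k ∈ range (2 ^ (p + 1)), dnn ((k : ℝ) / 2 ^ (p + 1)) ^ 2 :=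
    boolToRange (p + 1) (fun x => dnn x ^ 2)
  rw [hbtr, rangeSum p]
  have hx : ((2 : ℝ) ^ (2 * (p + 1))) = 4 * (2 ^ p) ^ 2 := by ring
  have hy : ((2 : ℝ) ^ (p + 1 + 2)) = 8 * 2 ^ p := by ring
  have hz : ((2 : ℝ) ^ (2 * (u + (p + 1)))) = 4 * (2 ^ p) ^ 2 * (2 ^ u) ^ 2 := by ring
  have hw : ((2 : ℝ) ^ (2 * u + 1)) = 2 * (2 ^ u) ^ 2 := by ring
  have hv : ((2 : ℝ) ^ (u + (p + 1) + 2)) = 8 * 2 ^ p * 2 ^ u := by ring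
  rw [hx, hy, hz, hw, hv]
  have h1 : ((2 : ℝ) ^ p) ≠ 0 := by positivity
  have h2 : ((2 : ℝ) ^ u) ≠ 0 := by positivity
  field_simp
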